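/- Let E ⊂ ℝⁿ be finite, Γ⃗₀ a shape field on E with l-th refinements Γ⃗_l, and M₀ > 0. With Γ(x,S) and Γ_l^{fp}(x,M₀) = ⋂_{S⊆E, #(S)≤(D+2)^l} Γ(x,S) defined as below, we have Γ_l^{fp}(x, M₀) ⊆ Γ_l(x, M₀) for every x ∈ E and l ≥ 0. -/

import Mathlib

noncomputable section

/-- Iterated partial derivative `∂^β` of a multivariate polynomial. -/
def pdiff {n : ℕ} (β : Fin n → ℕ) (P : MvPolynomial (Fin n) ℝ) :
    MvPolynomial (Fin n) ℝ :=
  (List.finRange n).foldr (fun i Q => (fun R => MvPolynomial.pderiv i R)^[β i] Q) P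

/-- `∂^β P` evaluated at a point of Euclidean space. -/
def pdEval {n : ℕ} (β : Fin n → ℕ) (P : MvPolynomial (Fin n) ℝ)
    (x : EuclideanSpace ℝ (Fin n)) : ℝ :=
  MvPolynomial.eval (fun i => x i) (pdiff β P)

/-- `Γ` is a shape field on `E`. -/
def ShapeField (m n : ℕ) (E : Set (EuclideanSpace ℝ (Fin n)))
    (Γ : EuclideanSpace ℝ (Fin n) → ℝ → Set (MvPolynomial (Fin n) ℝ)) : Prop :=
  ∀ x ∈ E, ∀ M : ℝ, 0 < M → Convex ℝ (Γ x M) ∧ (∀ P ∈ Γ x M, P.totalDegree ≤ m - 1) ∧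
    ∀ M' : ℝ, 0 < M' → M' ≤ M → Γ x M' ⊆ Γ x M

/-- The first refinement `Γ#` of a shape field `Γ`. -/
def refineOnce (m n : ℕ) (E : Set (EuclideanSpace ℝ (Fin n)))
    (Γ : EuclideanSpace ℝ (Fin n) → ℝ → Set (MvPolynomial (Fin n) ℝ)) :
    EuclideanSpace ℝ (Fin n) → ℝ → Set (MvPolynomial (Fin n) ℝ) :=
  fun x M => {Ps | Ps.totalDegree ≤ m - 1 ∧ ∀ y ∈ E, ∃ P ∈ Γ y M,
    ∀ β : Fin n → ℕ, (∑ i, β i) ≤ m - 1 →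
      |pdEval β (Ps - P) x| ≤ M * dist x y ^ (m - ∑ i, β i)}

/-- The `l`-th refinement of a shape field. -/
def refineN (m n : ℕ) (E : Set (EuclideanSpace ℝ (Fin n)))
    (Γ : EuclideanSpace ℝ (Fin n) → ℝ → Set (MvPolynomial (Fin n) ℝ)) :
    ℕ → EuclideanSpace ℝ (Fin n) → ℝ → Set (MvPolynomial (Fin n) ℝ)
  | 0 => Γ
  | l + 1 => refineOnce m n E (refineN m n E Γ l)

/-- The Whitney seminorm bound: `‖(P^y)_{y ∈ T}‖_{Ċ^m(T)} ≤ M₀`. -/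
def WhitneyNormLE (m n : ℕ) (M₀ : ℝ) (T : Set (EuclideanSpace ℝ (Fin n)))
    (P : EuclideanSpace ℝ (Fin n) → MvPolynomial (Fin n) ℝ) : Prop :=
  ∀ z ∈ T, ∀ w ∈ T, z ≠ w → ∀ α : Fin n → ℕ, (∑ i, α i) ≤ m →
    |pdEval α (P z - P w) z| ≤ M₀ * dist z w ^ (m - ∑ i, α i)

/-- `Γ(x, S)`: the set of `P^x ∈ 𝒫` arising from Whitney fields
`(P^y)_{y ∈ S ∪ {x}}` of `Ċ^m`-seminorm at most `M₀` with `P^y ∈ Γ₀(y, M₀)`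
for all `y ∈ S ∪ {x}`. -/
def GammaS (m n : ℕ) (Γ₀ : EuclideanSpace ℝ (Fin n) → ℝ → Set (MvPolynomial (Fin n) ℝ))
    (M₀ : ℝ) (x : EuclideanSpace ℝ (Fin n)) (S : Set (EuclideanSpace ℝ (Fin n))) :
    Set (MvPolynomial (Fin n) ℝ) :=
  {Px | ∃ P : EuclideanSpace ℝ (Fin n) → MvPolynomial (Fin n) ℝ,
    P x = Px ∧
    (∀ y ∈ S ∪ {x}, (P y).totalDegree ≤ m - 1 ∧ P y ∈ Γ₀ y M₀) ∧
    WhitneyNormLE m n M₀ (S ∪ {x}) P}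

/-!
Induction on `l`. In the step at `x` and `y ∈ E`, the sets
`{Q ∈ Γ(y, T) : |∂^β(Px - Q)(x)| ≤ M₀ |x - y|^(m - |β|) for |β| ≤ m - 1}`, `T ⊆ E`,
`#T ≤ (D + 2)^l`, are convex subsets of the `D`-dimensional space `𝒫`. Any `D + 1` of them
contain `P^y` for a Whitney field witnessing `Px ∈ Γ(x, S)`, where `S` is the union of those `T`
and `{y}`, so `#S ≤ (D + 1)(D + 2)^l + 1 ≤ (D + 2)^(l + 1)`. Helly's theorem then gives a common
point `Q`, which lies in `Γ_l(y, M₀)` by induction.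
-/

open MvPolynomial

section Jets

variable {m n : ℕ}

def pdiffLinear (β : Fin n → ℕ) : Module.End ℝ (MvPolynomial (Fin n) ℝ) :=
  (List.finRange n).foldr (fun i L => (pderiv i).toLinearMap ^ β i * L) 1

lemma pdiffLinear_apply (β : Fin n → ℕ) (P : MvPolynomial (Fin n) ℝ) :
    pdiffLinear β P = pdiff β P := by
  unfold pdiffLinear pdiff
  induction List.finRange n with
  | nil => rfl
  | cons i L ih =>
    rw [List.foldr_cons, List.foldr_cons, Module.End.mul_apply, Module.End.pow_apply, ih]
    rfl

def pdEvalLinear (β : Fin n → ℕ) (x : EuclideanSpace ℝ (Fin n)) :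
    MvPolynomial (Fin n) ℝ →ₗ[ℝ] ℝ :=
  (aeval fun i => x i).toLinearMap ∘ₗ pdiffLinear β

lemma pdEvalLinear_apply (β : Fin n → ℕ) (x : EuclideanSpace ℝ (Fin n))
    (P : MvPolynomial (Fin n) ℝ) : pdEvalLinear β x P = pdEval β P x := by
  simp [pdEvalLinear, pdEval, pdiffLinear_apply]

lemma pdEval_sub (β : Fin n → ℕ) (P Q : MvPolynomial (Fin n) ℝ) (x : EuclideanSpace ℝ (Fin n)) :
    pdEval β (P - Q) x = pdEval β P x - pdEval β Q x := by
  simp only [← pdEvalLinear_apply, map_sub]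

lemma convex_setOf_abs_pdEval_sub_le {V : Type*} [AddCommGroup V] [Module ℝ V]
    (f g : V →ₗ[ℝ] MvPolynomial (Fin n) ℝ) (β : Fin n → ℕ) (x : EuclideanSpace ℝ (Fin n))
    (c : ℝ) : Convex ℝ {v | |pdEval β (f v - g v) x| ≤ c} := by
  convert (convex_Icc (-c) c).linear_preimage (pdEvalLinear β x ∘ₗ (f - g)) using 1
  ext v
  simp [pdEvalLinear_apply, abs_le]

def nearJets (m n : ℕ) (M : ℝ) (x y : EuclideanSpace ℝ (Fin n)) (P : MvPolynomial (Fin n) ℝ) :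
    Set (MvPolynomial (Fin n) ℝ) :=
  {Q | ∀ β : Fin n → ℕ, (∑ i, β i) ≤ m - 1 →
    |pdEval β (P - Q) x| ≤ M * dist x y ^ (m - ∑ i, β i)}

lemma convex_nearJets (M : ℝ) (x y : EuclideanSpace ℝ (Fin n)) (P : MvPolynomial (Fin n) ℝ) :
    Convex ℝ (nearJets m n M x y P) := by
  simp only [nearJets, Set.ofPred_forall]
  refine convex_iInter₂ fun β _ => ?_
  have hball : {Q | |pdEval β (P - Q) x| ≤ M * dist x y ^ (m - ∑ i, β i)} =
      pdEvalLinear β x ⁻¹' Metric.closedBall (pdEval β P x) (M * dist x y ^ (m - ∑ i, β i)) := by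
    ext Q
    simp [pdEvalLinear_apply, pdEval_sub, Real.dist_eq, abs_sub_comm]
  rw [hball]
  exact (convex_closedBall _ _).linear_preimage _

end Jets

section WhitneyFields

variable {m n : ℕ} {Γ₀ : EuclideanSpace ℝ (Fin n) → ℝ → Set (MvPolynomial (Fin n) ℝ)} {M₀ : ℝ}
  {E S T T' : Set (EuclideanSpace ℝ (Fin n))}
  {F : EuclideanSpace ℝ (Fin n) → MvPolynomial (Fin n) ℝ} {x y : EuclideanSpace ℝ (Fin n)}

def AdmissibleField (m n : ℕ) (Γ₀ : EuclideanSpace ℝ (Fin n) → ℝ → Set (MvPolynomial (Fin n) ℝ))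
    (M₀ : ℝ) (T : Set (EuclideanSpace ℝ (Fin n)))
    (F : EuclideanSpace ℝ (Fin n) → MvPolynomial (Fin n) ℝ) : Prop :=
  (∀ y ∈ T, (F y).totalDegree ≤ m - 1 ∧ F y ∈ Γ₀ y M₀) ∧ WhitneyNormLE m n M₀ T F

lemma mem_gammaS_iff {Px : MvPolynomial (Fin n) ℝ} :
    Px ∈ GammaS m n Γ₀ M₀ x S ↔ ∃ F, F x = Px ∧ AdmissibleField m n Γ₀ M₀ (S ∪ {x}) F :=
  Iff.rfl

lemma AdmissibleField.mono (hF : AdmissibleField m n Γ₀ M₀ T F) (hT : T' ⊆ T) :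
    AdmissibleField m n Γ₀ M₀ T' F :=
  ⟨fun y hy => hF.1 y (hT hy), fun z hz w hw => hF.2 z (hT hz) w (hT hw)⟩

lemma AdmissibleField.apply_mem_gammaS (hF : AdmissibleField m n Γ₀ M₀ T F)
    (hST : S ∪ {y} ⊆ T) : F y ∈ GammaS m n Γ₀ M₀ y S :=
  mem_gammaS_iff.2 ⟨F, rfl, hF.mono hST⟩

lemma WhitneyNormLE.mem_nearJets (hF : WhitneyNormLE m n M₀ T F) (hM₀ : 0 ≤ M₀)
    (hx : x ∈ T) (hy : y ∈ T) : F y ∈ nearJets m n M₀ x y (F x) := by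
  intro β hβ
  rcases eq_or_ne x y with rfl | hxy
  · rw [sub_self, ← pdEvalLinear_apply, map_zero, abs_zero]
    positivity
  · exact hF x hx y hy hxy β (hβ.trans (Nat.sub_le m 1))

lemma mem_of_mem_gammaS {Px : MvPolynomial (Fin n) ℝ} (h : Px ∈ GammaS m n Γ₀ M₀ x S) :
    Px.totalDegree ≤ m - 1 ∧ Px ∈ Γ₀ x M₀ := by
  obtain ⟨F, rfl, hF⟩ := mem_gammaS_iff.1 h
  exact hF.1 x (Or.inr rfl)

lemma convex_setOf_admissibleField (hΓ₀ : ShapeField m n E Γ₀) (hM₀ : 0 < M₀) (hT : T ⊆ E) :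
    Convex ℝ {F | AdmissibleField m n Γ₀ M₀ T F} := by
  simp only [AdmissibleField, WhitneyNormLE, Set.ofPred_and, Set.ofPred_forall]
  set proj := LinearMap.proj (R := ℝ) (φ := fun _ : EuclideanSpace ℝ (Fin n) =>
    MvPolynomial (Fin n) ℝ)
  refine Convex.inter (convex_iInter₂ fun y hy => Convex.inter ?_ ?_) (convex_iInter₂ fun z _ =>
    convex_iInter₂ fun w _ => convex_iInter fun _ => convex_iInter₂ fun α _ =>
      convex_setOf_abs_pdEval_sub_le (proj z) (proj w) α z _)
  · simpa [Set.preimage, proj, mem_restrictTotalDegree] using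
      (restrictTotalDegree (Fin n) ℝ (m - 1)).convex.linear_preimage (proj y)
  · exact (hΓ₀ y (hT hy) M₀ hM₀).1.linear_preimage (proj y)

lemma convex_gammaS (hΓ₀ : ShapeField m n E Γ₀) (hM₀ : 0 < M₀) (hy : y ∈ E) (hS : S ⊆ E) :
    Convex ℝ (GammaS m n Γ₀ M₀ y S) := by
  have himage : GammaS m n Γ₀ M₀ y S =
      LinearMap.proj (R := ℝ) (φ := fun _ => MvPolynomial (Fin n) ℝ) y ''
        {F | AdmissibleField m n Γ₀ M₀ (S ∪ {y}) F} := by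
    ext Px
    simp [mem_gammaS_iff, and_comm]
  rw [himage]
  exact (convex_setOf_admissibleField hΓ₀ hM₀
    (Set.union_subset hS (Set.singleton_subset_iff.2 hy))).linear_image _

end WhitneyFields

open Finset in
lemma Convex.helly_theorem_submodule {ι W : Type*} [AddCommGroup W] [Module ℝ W]
    (V : Submodule ℝ W) [FiniteDimensional ℝ V] {F : ι → Set W} {s : Finset ι}
    (h_convex : ∀ i ∈ s, Convex ℝ (F i))
    (h_inter : ∀ I ⊆ s, #I ≤ Module.finrank ℝ V + 1 → ∃ v ∈ V, ∀ i ∈ I, v ∈ F i) :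
    ∃ v ∈ V, ∀ i ∈ s, v ∈ F i := by
  obtain ⟨v, hv⟩ := Convex.helly_theorem' (F := fun i => V.subtype ⁻¹' F i) (s := s)
    (fun i hi => (h_convex i hi).linear_preimage V.subtype) fun I hI hcard => by
      obtain ⟨v, hvV, hv⟩ := h_inter I hI hcard
      exact ⟨⟨v, hvV⟩, Set.mem_iInter₂.2 hv⟩
  exact ⟨v, v.2, fun i hi => Set.mem_iInter₂.1 hv i hi⟩

section Refinement

variable {m n : ℕ} {E : Set (EuclideanSpace ℝ (Fin n))}
  {Γ₀ : EuclideanSpace ℝ (Fin n) → ℝ → Set (MvPolynomial (Fin n) ℝ)} {M₀ : ℝ} {D : ℕ}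

lemma mem_refineOnce_iff {Γ : EuclideanSpace ℝ (Fin n) → ℝ → Set (MvPolynomial (Fin n) ℝ)}
    {x : EuclideanSpace ℝ (Fin n)} {M : ℝ} {P : MvPolynomial (Fin n) ℝ} :
    P ∈ refineOnce m n E Γ x M ↔
      P.totalDegree ≤ m - 1 ∧ ∀ y ∈ E, (Γ y M ∩ nearJets m n M x y P).Nonempty :=
  Iff.rfl

lemma exists_mem_forall_mem_gammaS_inter_nearJets (hM₀ : 0 ≤ M₀)
    {x y : EuclideanSpace ℝ (Fin n)} (hy : y ∈ E) {k : ℕ} {Px : MvPolynomial (Fin n) ℝ}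
    (h : ∀ S ⊆ E, S.ncard ≤ (D + 1) * k + 1 → Px ∈ GammaS m n Γ₀ M₀ x S)
    {I : Finset (Finset (EuclideanSpace ℝ (Fin n)))} (hI : ∀ T ∈ I, ↑T ⊆ E ∧ T.card ≤ k)
    (hIcard : I.card ≤ D + 1) :
    ∃ Q ∈ restrictTotalDegree (Fin n) ℝ (m - 1),
      ∀ T ∈ I, Q ∈ GammaS m n Γ₀ M₀ y ↑T ∩ nearJets m n M₀ x y Px := by
  classical
  set U := I.biUnion id
  have hUE : ↑U ∪ {y} ⊆ E :=
    Set.union_subset (by simpa [U] using fun T hT => (hI T hT).1) (Set.singleton_subset_iff.2 hy)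
  have hUcard : (↑U ∪ {y} : Set _).ncard ≤ (D + 1) * k + 1 := by
    have hU : U.card ≤ (D + 1) * k := calc
      U.card ≤ I.card * k := Finset.card_biUnion_le_card_mul _ _ _ fun T hT => (hI T hT).2
      _ ≤ (D + 1) * k := by gcongr
    refine (Set.ncard_union_le _ _).trans ?_
    rw [Set.ncard_coe_finset, Set.ncard_singleton]
    omega
  obtain ⟨F, rfl, hF⟩ := mem_gammaS_iff.1 (h _ hUE hUcard)
  refine ⟨F y, (mem_restrictTotalDegree _ _ _).2 (hF.1 y (by simp)).1, fun T hT =>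
    ⟨hF.apply_mem_gammaS ?_, hF.2.mem_nearJets hM₀ (by simp) (by simp)⟩⟩
  exact Set.union_subset_union_left _ (Finset.coe_subset.2 (Finset.subset_biUnion_of_mem id hT))
    |>.trans Set.subset_union_left

lemma exists_mem_nearJets_forall_mem_gammaS (hE : E.Finite) (hΓ₀ : ShapeField m n E Γ₀)
    (hM₀ : 0 < M₀) (hD : Module.finrank ℝ (restrictTotalDegree (Fin n) ℝ (m - 1)) = D)
    {x y : EuclideanSpace ℝ (Fin n)} (hy : y ∈ E) {k : ℕ} {Px : MvPolynomial (Fin n) ℝ}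
    (h : ∀ S ⊆ E, S.ncard ≤ (D + 1) * k + 1 → Px ∈ GammaS m n Γ₀ M₀ x S) :
    ∃ Q ∈ nearJets m n M₀ x y Px, ∀ S ⊆ E, S.ncard ≤ k → Q ∈ GammaS m n Γ₀ M₀ y S := by
  classical
  set s := hE.toFinset.powerset.filter (·.card ≤ k)
  have mem_s {T} : T ∈ s ↔ ↑T ⊆ E ∧ T.card ≤ k := by
    simp [s, ← Finset.coe_subset]
  obtain ⟨Q, -, hQ⟩ := Convex.helly_theorem_submodule (restrictTotalDegree (Fin n) ℝ (m - 1))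
    (F := fun T : Finset _ => GammaS m n Γ₀ M₀ y ↑T ∩ nearJets m n M₀ x y Px) (s := s)
    (fun T hT => (convex_gammaS hΓ₀ hM₀ hy (mem_s.1 hT).1).inter (convex_nearJets ..))
    fun I hI hcard => exists_mem_forall_mem_gammaS_inter_nearJets hM₀.le hy h
      (fun T hT => mem_s.1 (hI hT)) (hD ▸ hcard)
  refine ⟨Q, (hQ ∅ (mem_s.2 (by simp))).2, fun S hSE hS => ?_⟩
  have hSfin := hE.subset hSE
  have hSs : hSfin.toFinset ∈ s :=
    mem_s.2 ⟨by simpa, by rwa [← Set.ncard_eq_toFinset_card S hSfin]⟩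
  simpa using (hQ _ hSs).1

end Refinement

theorem fp_intersection_subset_refinement_general (m n : ℕ)
    (E : Set (EuclideanSpace ℝ (Fin n))) (hE : E.Finite)
    (Γ₀ : EuclideanSpace ℝ (Fin n) → ℝ → Set (MvPolynomial (Fin n) ℝ))
    (hsf : ShapeField m n E Γ₀)
    (M₀ : ℝ) (hM₀ : 0 < M₀)
    (D : ℕ) (hD : D = Module.finrank ℝ (MvPolynomial.restrictTotalDegree (Fin n) ℝ (m - 1))) :
    ∀ x ∈ E, ∀ l : ℕ, ∀ Px : MvPolynomial (Fin n) ℝ,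
      (∀ S : Set (EuclideanSpace ℝ (Fin n)), S ⊆ E → S.ncard ≤ (D + 2) ^ l →
        Px ∈ GammaS m n Γ₀ M₀ x S) →
      Px ∈ refineN m n E Γ₀ l x M₀ := by
  intro x hx l
  induction l generalizing x with
  | zero => exact fun Px h => (mem_of_mem_gammaS (h ∅ (Set.empty_subset E) (by simp))).2
  | succ l ih =>
    intro Px h
    have hcard : (D + 1) * (D + 2) ^ l + 1 ≤ (D + 2) ^ (l + 1) := by
      rw [pow_succ]
      nlinarith [Nat.one_le_pow l (D + 2) (by omega)]
    refine mem_refineOnce_iff.2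
      ⟨(mem_of_mem_gammaS (h ∅ (Set.empty_subset E) (by simp))).1, fun y hy => ?_⟩
    obtain ⟨Q, hQ, hQy⟩ := exists_mem_nearJets_forall_mem_gammaS hE hsf hM₀ hD.symm hy
      fun S hS hSc => h S hS (hSc.trans hcard)
    exact ⟨Q, ih y hy Q hQy, hQ⟩

/-- Lemma 10.2: `Γ_l^{fp}(x, M₀) ⊆ Γ_l(x, M₀)` for all `x ∈ E` and `l ≥ 0`,
where `Γ_l^{fp}(x, M₀) = ⋂_{S ⊆ E, #(S) ≤ (D+2)^l} Γ(x, S)` and `Γ_l` is the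
`l`-th refinement of `Γ₀`, with `D = dim 𝒫`. -/
theorem fp_intersection_subset_refinement (m n : ℕ) (hm : 0 < m) (hn : 0 < n)
    (E : Set (EuclideanSpace ℝ (Fin n))) (hE : E.Finite)
    (Γ₀ : EuclideanSpace ℝ (Fin n) → ℝ → Set (MvPolynomial (Fin n) ℝ))
    (hsf : ShapeField m n E Γ₀)
    (M₀ : ℝ) (hM₀ : 0 < M₀)
    (D : ℕ) (hD : D = Module.finrank ℝ (MvPolynomial.restrictTotalDegree (Fin n) ℝ (m - 1))) :
    ∀ x ∈ E, ∀ l : ℕ, ∀ Px : MvPolynomial (Fin n) ℝ,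
      (∀ S : Set (EuclideanSpace ℝ (Fin n)), S ⊆ E → S.ncard ≤ (D + 2) ^ l →
        Px ∈ GammaS m n Γ₀ M₀ x S) →
      Px ∈ refineN m n E Γ₀ l x M₀ :=
  fp_intersection_subset_refinement_general m n E hE Γ₀ hsf M₀ hM₀ D hD

end
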